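/- Every basis $(x, y)$ of the free group $F_2$ is conjugate (by a single element) to a basis $(x', y')$ in which both $x'$ and $y'$ are cyclically reduced words. -/

import Mathlib

open FreeGroup List

abbrev F2 := FreeGroup (Fin 2)

/-- The generator `a` of `F₂`. -/
def ga : F2 := FreeGroup.of 0

/-- The generator `b` of `F₂`. -/
def gb : F2 := FreeGroup.of 1

/-- `v` contains a block `x^{±k}`: `k` consecutive occurrences of the letter `x`
with the same sign, as a contiguous subword of the reduced word of `v`.
Thus "every `x`-exponent of `v` has absolute value `≤ n`" is `¬ HasBlock x (n+1) v`. -/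
def HasBlock (x : Fin 2) (k : ℕ) (v : F2) : Prop :=
  (List.replicate k (x, true)) <:+: v.toWord ∨ (List.replicate k (x, false)) <:+: v.toWord

/-- A reduced word is cyclically reduced if its last letter is not
the inverse of its first letter. -/
def CyclicallyReduced (l : List (Fin 2 × Bool)) : Prop :=
  ∀ p ∈ l.head?, ∀ q ∈ l.getLast?, q ≠ (p.1, !p.2)

/-- `(x, y)` is a basis of `F₂`: the image of `(a, b)` under an automorphism. -/
def IsBasis (x y : F2) : Prop := ∃ φ : F2 ≃* F2, φ ga = x ∧ φ gb = y

/-! If `x` is not cyclically reduced, its reduced word is `C u C⁻¹` for a letter `C`. For a basis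
`(x, y)`, the word of `y` must then begin with `C` or end with `C⁻¹`: otherwise a ping-pong
argument shows that an alternating product of nonzero powers of `x` and `y` has length at least
two unless it is a power of `y`, so the generators `a` and `b`, of length one, would both be
powers of `y` and commute. Hence conjugating by `C` shortens `x` by two letters without
lengthening `y`, and a conjugate of `(x, y)` of minimal total length is cyclically reduced. -/

theorem List.two_le_length_of_head?_ne_getLast? {β : Type*} {l : List β} {p q : β}
    (hp : l.head? = some p) (hq : l.getLast? = some q) (hpq : p ≠ q) : 2 ≤ l.length := by
  match l with
  | [] => simp at hp
  | [a] => simp_all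
  | _ :: _ :: _ => simp

namespace FreeGroup

variable {α : Type*}

theorem inv_mk_singleton (p : α × Bool) : (mk [p])⁻¹ = mk [(p.1, !p.2)] := by
  simp [inv_mk, invRev]

variable [DecidableEq α]

theorem toWord_mul_eq_append {v w : FreeGroup α}
    (h : ∀ p ∈ v.toWord.getLast?, ∀ q ∈ w.toWord.head?, q ≠ (p.1, !p.2)) :
    (v * w).toWord = v.toWord ++ w.toWord := by
  rw [toWord_mul]
  refine IsReduced.reduce_eq (List.isChain_append.mpr ⟨isReduced_toWord, isReduced_toWord, ?_⟩)
  intro p hp q hq hpq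
  by_contra hne
  exact h p hp q hq (Prod.ext hpq.symm (Bool.eq_not.mpr (Ne.symm hne)))

theorem head?_toWord_inv (w : FreeGroup α) :
    w⁻¹.toWord.head? = w.toWord.getLast?.map fun p => (p.1, !p.2) := by
  rw [toWord_inv, invRev, List.head?_reverse, List.getLast?_map]

theorem getLast?_toWord_inv (w : FreeGroup α) :
    w⁻¹.toWord.getLast? = w.toWord.head?.map fun p => (p.1, !p.2) := by
  rw [toWord_inv, invRev, List.getLast?_reverse, List.head?_map]

theorem head?_toWord_pow (w : FreeGroup α) {n : ℕ} (hn : n ≠ 0) :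
    (w ^ n).toWord.head? = w.toWord.head? := by
  obtain ⟨n, rfl⟩ := Nat.exists_eq_add_one_of_ne_zero hn
  rw [toWord_pow, reduceCyclically.reduce_flatten_replicate_succ isReduced_toWord]
  conv_rhs => rw [← reduceCyclically.conj_conjugator_reduceCyclically w.toWord]
  rcases reduceCyclically.conjugator w.toWord with _ | ⟨a, l⟩
  · rcases reduceCyclically w.toWord with _ | ⟨b, m⟩ <;> simp [List.replicate_succ]
  · simp

theorem getLast?_toWord_pow (w : FreeGroup α) {n : ℕ} (hn : n ≠ 0) :
    (w ^ n).toWord.getLast? = w.toWord.getLast? := by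
  rw [← inv_inv w, inv_pow, getLast?_toWord_inv, getLast?_toWord_inv, head?_toWord_pow _ hn]

theorem norm_conj_le_of_head? {w : FreeGroup α} {p : α × Bool} (h : w.toWord.head? = some p) :
    ((mk [p])⁻¹ * w * mk [p]).norm ≤ w.norm := by
  obtain ⟨t, ht⟩ := List.head?_eq_some_iff.mp h
  have hw : (mk [p])⁻¹ * w = mk t := by
    rw [← mk_toWord (x := w), ht, show mk (p :: t) = mk [p] * mk t from (mul_mk (L₁ := [p])).symm,
      inv_mul_cancel_left]
  calc ((mk [p])⁻¹ * w * mk [p]).norm ≤ (mk t).norm + (mk [p]).norm := hw ▸ norm_mul_le _ _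
    _ ≤ t.length + 1 := add_le_add norm_mk_le norm_mk_le
    _ = w.norm := by simp [norm, ht]

theorem norm_conj_le_of_getLast? {w : FreeGroup α} {p : α × Bool}
    (h : w.toWord.getLast? = some (p.1, !p.2)) :
    ((mk [p])⁻¹ * w * mk [p]).norm ≤ w.norm := by
  have hinv : w⁻¹.toWord.head? = some p := by
    simp only [head?_toWord_inv, h, Option.map_some, Bool.not_not]
  calc ((mk [p])⁻¹ * w * mk [p]).norm = ((mk [p])⁻¹ * w⁻¹ * mk [p]).norm := by
        rw [← norm_inv_eq]; simp [mul_assoc]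
    _ ≤ w⁻¹.norm := norm_conj_le_of_head? hinv
    _ = w.norm := norm_inv_eq

theorem norm_conj_add_two_le {w : FreeGroup α} {p : α × Bool} (hh : w.toWord.head? = some p)
    (hl : w.toWord.getLast? = some (p.1, !p.2)) :
    ((mk [p])⁻¹ * w * mk [p]).norm + 2 ≤ w.norm := by
  generalize hL : w.toWord = L at hh hl
  cases L using List.bidirectionalRec with
  | nil => simp at hh
  | singleton a =>
    simp only [List.head?_cons, List.getLast?_singleton, Option.some.injEq] at hh hl
    subst hh
    simp [Prod.ext_iff] at hl
  | cons_append a m b =>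
    rw [List.head?_cons, Option.some.injEq] at hh
    rw [← List.cons_append, List.getLast?_concat, Option.some.injEq] at hl
    subst hh hl
    have hw : (mk [a])⁻¹ * w * mk [a] = mk m := by
      have hsplit : mk (a :: (m ++ [(a.1, !a.2)])) = mk [a] * mk m * (mk [a])⁻¹ := by
        rw [inv_mk_singleton, mul_mk, mul_mk]; rfl
      rw [← mk_toWord (x := w), hL, hsplit]
      group
    calc ((mk [a])⁻¹ * w * mk [a]).norm + 2 ≤ m.length + 2 := by
          rw [hw]; exact Nat.add_le_add_right norm_mk_le 2
      _ = w.norm := by simp [norm, hL]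

end FreeGroup

section AlternatingProduct

variable {G : Type*} [Group G]

theorem zpow_induction_of_pow {P : G → Prop} (inv : ∀ w, P w → P w⁻¹)
    (pow : ∀ w, P w → ∀ n : ℕ, n ≠ 0 → P (w ^ n)) {w : G} (hw : P w) {k : ℤ} (hk : k ≠ 0) :
    P (w ^ k) := by
  obtain ⟨n, rfl | rfl⟩ := Int.eq_nat_or_neg k
  · exact_mod_cast pow w hw n (by omega)
  · rw [zpow_neg, zpow_natCast, ← inv_pow]
    exact pow _ (inv w hw) n (by omega)

/-- `AltProd x y b w`: `w` is a product of nonzero powers alternately of `x` and `y`, the first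
one a power of `x` if `b` and of `y` otherwise. -/
inductive AltProd (x y : G) : Bool → G → Prop
  | zpow (b : Bool) {k : ℤ} (hk : k ≠ 0) : AltProd x y b (cond b x y ^ k)
  | cons (b : Bool) {k : ℤ} {w : G} (hk : k ≠ 0) (hw : AltProd x y (!b) w) :
      AltProd x y b (cond b x y ^ k * w)

namespace AltProd

variable {x y : G}

theorem zpow_mul {w : G} (hw : w = 1 ∨ ∃ b, AltProd x y b w) (b : Bool) (k : ℤ) :
    cond b x y ^ k * w = 1 ∨ ∃ b', AltProd x y b' (cond b x y ^ k * w) := by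
  by_cases hk : k = 0
  · simpa [hk] using hw
  rcases hw with rfl | ⟨b', hw⟩
  · exact .inr ⟨b, by simpa using zpow b hk⟩
  by_cases hb : b' = b
  · subst hb
    cases hw with
    | @zpow _ j hj =>
      rw [← zpow_add]
      by_cases hkj : k + j = 0
      · simp [hkj]
      · exact .inr ⟨b', zpow b' hkj⟩
    | @cons _ j _ hj hw' =>
      rw [← mul_assoc, ← zpow_add]
      by_cases hkj : k + j = 0
      · exact .inr ⟨!b', by simpa [hkj] using hw'⟩
      · exact .inr ⟨b', cons b' hkj hw'⟩
  · obtain rfl : b' = !b := Bool.eq_not.mpr hb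
    exact .inr ⟨b, cons b hk hw⟩

theorem of_mem_closure {w : G} (hw : w ∈ Subgroup.closure {x, y}) :
    w = 1 ∨ ∃ b, AltProd x y b w := by
  induction hw using Subgroup.closure_induction_left with
  | one => exact .inl rfl
  | mul_left s hs w _ ih =>
    rcases hs with rfl | rfl
    · simpa using zpow_mul ih true 1
    · simpa using zpow_mul ih false 1
  | inv_mul_cancel s hs w _ ih =>
    rcases hs with rfl | rfl
    · simpa using zpow_mul ih true (-1)
    · simpa using zpow_mul ih false (-1)

end AltProd

end AlternatingProduct

namespace FreeGroup

variable {α : Type*} [DecidableEq α] {x y : FreeGroup α} {C : α × Bool}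

theorem head?_getLast?_toWord_zpow (hh : x.toWord.head? = some C)
    (hl : x.toWord.getLast? = some (C.1, !C.2)) {k : ℤ} (hk : k ≠ 0) :
    (x ^ k).toWord.head? = some C ∧ (x ^ k).toWord.getLast? = some (C.1, !C.2) := by
  refine zpow_induction_of_pow
    (P := fun w : FreeGroup α => w.toWord.head? = some C ∧ w.toWord.getLast? = some (C.1, !C.2))
    (fun w ⟨hh, hl⟩ => ⟨?_, ?_⟩) (fun w ⟨hh, hl⟩ n hn => ⟨?_, ?_⟩) ⟨hh, hl⟩ hk
  · rw [head?_toWord_inv, hl]; simp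
  · rw [getLast?_toWord_inv, hh]; simp
  · rw [head?_toWord_pow w hn, hh]
  · rw [getLast?_toWord_pow w hn, hl]

theorem head?_getLast?_toWord_zpow_ne (hh : y.toWord.head? ≠ some C)
    (hl : y.toWord.getLast? ≠ some (C.1, !C.2)) {k : ℤ} (hk : k ≠ 0) :
    (y ^ k).toWord.head? ≠ some C ∧ (y ^ k).toWord.getLast? ≠ some (C.1, !C.2) := by
  refine zpow_induction_of_pow
    (P := fun w : FreeGroup α => w.toWord.head? ≠ some C ∧ w.toWord.getLast? ≠ some (C.1, !C.2))
    (fun w ⟨hh, hl⟩ => ⟨?_, ?_⟩) (fun w ⟨hh, hl⟩ n hn => ⟨?_, ?_⟩) ⟨hh, hl⟩ hk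
  · rw [head?_toWord_inv, Ne, Option.map_eq_some_iff]
    rintro ⟨p, hp, rfl⟩
    exact hl (by simpa using hp)
  · rw [getLast?_toWord_inv, Ne, Option.map_eq_some_iff]
    rintro ⟨p, hp, hpC⟩
    exact hh (by simp_all [Prod.ext_iff])
  · rwa [head?_toWord_pow w hn]
  · rwa [getLast?_toWord_pow w hn]

theorem head?_getLast?_toWord_zpow_cond (hy1 : y ≠ 1) (hxh : x.toWord.head? = some C)
    (hxl : x.toWord.getLast? = some (C.1, !C.2)) (hyh : y.toWord.head? ≠ some C)
    (hyl : y.toWord.getLast? ≠ some (C.1, !C.2)) (b : Bool) {k : ℤ} (hk : k ≠ 0) :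
    cond b x y ^ k ≠ 1 ∧ ((cond b x y ^ k).toWord.head? = some C ↔ b) ∧
      ((cond b x y ^ k).toWord.getLast? = some (C.1, !C.2) ↔ b) := by
  cases b <;> simp only [cond_false, cond_true, Bool.false_eq_true, iff_false, iff_true]
  · exact ⟨(IsMulTorsionFree.zpow_eq_one_iff_left hk).not.mpr hy1,
      head?_getLast?_toWord_zpow_ne hyh hyl hk⟩
  · obtain ⟨hh, hl⟩ := head?_getLast?_toWord_zpow hxh hxl hk
    exact ⟨fun h => by simp [h] at hh, hh, hl⟩

theorem AltProd.toWord_spec (hy1 : y ≠ 1) (hxh : x.toWord.head? = some C)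
    (hxl : x.toWord.getLast? = some (C.1, !C.2)) (hyh : y.toWord.head? ≠ some C)
    (hyl : y.toWord.getLast? ≠ some (C.1, !C.2)) {b : Bool} {w : FreeGroup α}
    (hw : AltProd x y b w) :
    w ≠ 1 ∧ (w.toWord.head? = some C ↔ b) ∧ (w ∈ Subgroup.zpowers y ∨ 2 ≤ w.norm) := by
  induction hw with
  | zpow b hk =>
    obtain ⟨hs1, hsh, hsl⟩ := head?_getLast?_toWord_zpow_cond hy1 hxh hxl hyh hyl b hk
    refine ⟨hs1, hsh, ?_⟩
    cases b
    · exact .inl (Subgroup.zpow_mem_zpowers y _)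
    · exact .inr (List.two_le_length_of_head?_ne_getLast? (hsh.mpr rfl) (hsl.mpr rfl)
        (by simp [Prod.ext_iff]))
  | @cons b k w hk hw ih =>
    obtain ⟨hw1, hwh, -⟩ := ih
    obtain ⟨hs1, hsh, hsl⟩ := head?_getLast?_toWord_zpow_cond hy1 hxh hxl hyh hyl b hk
    have hsw := toWord_mul_eq_append (v := cond b x y ^ k) (w := w) fun p hp q hq hqp => by
      rw [Option.mem_def] at hp hq
      subst hqp
      -- a cancellation at the junction would force `b ↔ !b`
      have e1 : b = true ↔ p = (C.1, !C.2) := by rw [← hsl, hp, Option.some_inj]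
      have e2 : (!b) = true ↔ (p.1, !p.2) = C := by rw [← hwh, hq, Option.some_inj]
      have e3 : p = (C.1, !C.2) ↔ (p.1, !p.2) = C := by constructor <;> rintro rfl <;> simp
      exact absurd (e1.trans (e3.trans e2.symm)) (by cases b <;> simp)
    have hsne : (cond b x y ^ k).toWord ≠ [] := by rwa [Ne, toWord_eq_nil_iff]
    have hwne : w.toWord ≠ [] := by rwa [Ne, toWord_eq_nil_iff]
    refine ⟨by rw [Ne, ← toWord_eq_nil_iff, hsw]; simp [hsne], ?_, .inr ?_⟩
    · rw [hsw, List.head?_append_of_ne_nil _ hsne, hsh]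
    · simp only [norm, hsw, List.length_append]
      have := List.length_pos_of_ne_nil hsne
      have := List.length_pos_of_ne_nil hwne
      omega

theorem mem_zpowers_of_mem_closure_of_norm_le_one (hy1 : y ≠ 1)
    (hxh : x.toWord.head? = some C) (hxl : x.toWord.getLast? = some (C.1, !C.2))
    (hyh : y.toWord.head? ≠ some C) (hyl : y.toWord.getLast? ≠ some (C.1, !C.2))
    {w : FreeGroup α} (hw : w ∈ Subgroup.closure {x, y}) (hw1 : w.norm ≤ 1) :
    w ∈ Subgroup.zpowers y := by
  obtain rfl | ⟨b, hb⟩ := AltProd.of_mem_closure hw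
  · exact one_mem _
  obtain ⟨-, -, h | h⟩ := AltProd.toWord_spec hy1 hxh hxl hyh hyl hb
  · exact h
  · omega

end FreeGroup

theorem ga_mul_gb_ne_gb_mul_ga : ga * gb ≠ gb * ga := by
  decide

theorem closure_ga_gb : Subgroup.closure {ga, gb} = ⊤ := by
  rw [← FreeGroup.closure_range_of]
  congr
  ext
  simp [Fin.exists_fin_two, ga, gb, eq_comm]

namespace IsBasis

variable {x y : F2}

theorem conj (h : IsBasis x y) (g : F2) : IsBasis (g⁻¹ * x * g) (g⁻¹ * y * g) := by
  obtain ⟨φ, rfl, rfl⟩ := h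
  exact ⟨φ.trans (MulAut.conj g⁻¹), by simp [mul_assoc], by simp [mul_assoc]⟩

theorem symm (h : IsBasis x y) : IsBasis y x := by
  obtain ⟨φ, rfl, rfl⟩ := h
  exact ⟨(freeGroupCongr (Equiv.swap 0 1)).trans φ, rfl, rfl⟩

theorem right_ne_one (h : IsBasis x y) : y ≠ 1 := by
  obtain ⟨φ, -, rfl⟩ := h
  simp [gb]

theorem closure_eq_top (h : IsBasis x y) : Subgroup.closure {x, y} = ⊤ := by
  obtain ⟨φ, rfl, rfl⟩ := h
  have := MonoidHom.map_closure (φ : F2 →* F2) {ga, gb}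
  rw [closure_ga_gb, Subgroup.map_top_of_surjective _ φ.surjective, Set.image_pair] at this
  exact this.symm

theorem head?_eq_or_getLast?_eq (h : IsBasis x y) {C : Fin 2 × Bool}
    (hxh : x.toWord.head? = some C) (hxl : x.toWord.getLast? = some (C.1, !C.2)) :
    y.toWord.head? = some C ∨ y.toWord.getLast? = some (C.1, !C.2) := by
  by_contra! hy
  have hzpowers (w : F2) (hw : w.norm ≤ 1) : w ∈ Subgroup.zpowers y :=
    mem_zpowers_of_mem_closure_of_norm_le_one h.right_ne_one hxh hxl hy.1 hy.2
      (h.closure_eq_top ▸ Subgroup.mem_top w) hw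
  exact ga_mul_gb_ne_gb_mul_ga <|
    setLike_mul_comm (hzpowers ga (norm_of 0).le) (hzpowers gb (norm_of 1).le)

theorem exists_norm_conj_add_lt (h : IsBasis x y) (hx : ¬ CyclicallyReduced x.toWord) :
    ∃ c : F2, (c⁻¹ * x * c).norm + (c⁻¹ * y * c).norm < x.norm + y.norm := by
  simp only [CyclicallyReduced, not_forall, not_not, Option.mem_def] at hx
  obtain ⟨p, hxh, _, hxl, rfl⟩ := hx
  refine ⟨mk [p], ?_⟩
  have hx' := norm_conj_add_two_le hxh hxl
  have hy' : ((mk [p])⁻¹ * y * mk [p]).norm ≤ y.norm :=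
    (h.head?_eq_or_getLast?_eq hxh hxl).elim norm_conj_le_of_head? norm_conj_le_of_getLast?
  omega

theorem cyclicallyReduced_of_forall_norm_le (h : IsBasis x y)
    (hmin : ∀ c : F2, x.norm + y.norm ≤ (c⁻¹ * x * c).norm + (c⁻¹ * y * c).norm) :
    CyclicallyReduced x.toWord ∧ CyclicallyReduced y.toWord := by
  refine ⟨by_contra fun hx => ?_, by_contra fun hy => ?_⟩
  · obtain ⟨c, hc⟩ := h.exists_norm_conj_add_lt hx
    exact (hc.trans_le (hmin c)).false
  · obtain ⟨c, hc⟩ := h.symm.exists_norm_conj_add_lt hy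
    have := hmin c
    omega

end IsBasis

/-- Every basis of `F₂` is conjugate (by a single element) to a basis in which both
entries are cyclically reduced. -/
theorem basis_conjugate_to_cyclically_reduced (x y : F2) (h : IsBasis x y) :
    ∃ g : F2, CyclicallyReduced (g⁻¹ * x * g).toWord ∧
      CyclicallyReduced (g⁻¹ * y * g).toWord ∧
      IsBasis (g⁻¹ * x * g) (g⁻¹ * y * g) := by
  let f (g : F2) : ℕ := (g⁻¹ * x * g).norm + (g⁻¹ * y * g).norm
  let g := Function.argmin f
  have hmin (c : F2) : (g⁻¹ * x * g).norm + (g⁻¹ * y * g).norm ≤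
      (c⁻¹ * (g⁻¹ * x * g) * c).norm + (c⁻¹ * (g⁻¹ * y * g) * c).norm := by
    have hconj (z : F2) : c⁻¹ * (g⁻¹ * z * g) * c = (g * c)⁻¹ * z * (g * c) := by group
    rw [hconj, hconj]
    exact Function.argmin_le f (g * c)
  obtain ⟨hx, hy⟩ := (h.conj g).cyclicallyReduced_of_forall_norm_le hmin
  exact ⟨g, hx, hy, h.conj g⟩
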